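/- arXiv:math/0701070 — 5 statements merged into one kernel-verified Lean document; each statement's English description precedes it below -/
import Mathlib

section
/- Let Φ be a real random variable with EΦ = 0, Var(Φ) = 1, and E|Φ|^t ≤ τ for some t > 2 and τ > 0. Then Prob{Φ ≥ 0} > 0.25·τ^(-2/(t-2)) and Prob{Φ ≤ 0} > 0.25·τ^(-2/(t-2)). -/
open MeasureTheory

/-!
Write `M = E|Φ|`. Hölder's inequality with weights `(t-2)/(t-1)` and `1/(t-1)` interpolates the
second moment between the first and the `t`-th: `1 = EΦ² ≤ M^((t-2)/(t-1)) τ^(1/(t-1))`, so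
`M ≥ τ^(-1/(t-2))`. Since `EΦ = 0`, half of `M` is carried by `{Φ ≥ 0}`, and Hölder against the
indicator of that set gives `M/2 ≤ τ^(1/t) P{Φ ≥ 0}^((t-1)/t)`. Hence
`P{Φ ≥ 0} ≥ 2^(-t/(t-1)) τ^(-2/(t-2))`, and `2^(-t/(t-1)) > 1/4` because `t/(t-1) < 2`.
The event `{Φ ≤ 0}` is the same statement for `-Φ`.
-/

theorem quarter_mul_rpow_lt_of_bounds {t τ M P : ℝ} (ht : 2 < t) (hτ : 0 < τ) (hP : 0 ≤ P)
    (hM : τ ^ (-1 / (t - 2)) ≤ M) (hMP : M / 2 ≤ τ ^ (1 / t) * P ^ ((t - 1) / t)) :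
    0.25 * τ ^ (-2 / (t - 2)) < P := by
  have ht1 : 0 < t - 1 := by linarith
  have ht2 : t - 2 ≠ 0 := by linarith
  set c := τ ^ (-1 / (t - 2) - 1 / t) / 2 with hc_def
  have hc : c ≤ P ^ (t / (t - 1))⁻¹ := by
    have hcτ : c * τ ^ (1 / t) = τ ^ (-1 / (t - 2)) / 2 := by
      rw [div_mul_eq_mul_div, ← Real.rpow_add hτ, sub_add_cancel]
    rw [inv_div]
    refine le_of_mul_le_mul_right ?_ (Real.rpow_pos_of_pos hτ (1 / t))
    rw [hcτ, mul_comm]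
    linarith
  have hhalf : (0.25 : ℝ) < (1 / 2) ^ (t / (t - 1)) := by
    calc (0.25 : ℝ) = (1 / 2) ^ (2 : ℝ) := by norm_num
      _ < (1 / 2) ^ (t / (t - 1)) :=
        Real.rpow_lt_rpow_of_exponent_gt (by norm_num) (by norm_num)
          (by rw [div_lt_iff₀ ht1]; linarith)
  calc 0.25 * τ ^ (-2 / (t - 2)) < (1 / 2) ^ (t / (t - 1)) * τ ^ (-2 / (t - 2)) := by
        gcongr
    _ = c ^ (t / (t - 1)) := by
      have hexp : (-1 / (t - 2) - 1 / t) * (t / (t - 1)) = -2 / (t - 2) := by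
        field_simp
        ring
      rw [hc_def, Real.div_rpow (Real.rpow_nonneg hτ.le _) zero_le_two, ← Real.rpow_mul hτ.le,
        hexp, Real.div_rpow zero_le_one zero_le_two, Real.one_rpow]
      ring
    _ ≤ P := (Real.le_rpow_inv_iff_of_pos (by positivity) hP (by positivity)).1 hc

section

variable {α : Type*} [MeasurableSpace α] {μ : Measure α}

theorem integral_rpow_mul_rpow_le {f g : α → ℝ} (hf0 : ∀ a, 0 ≤ f a) (hg0 : ∀ a, 0 ≤ g a)
    (hf : Integrable f μ) (hg : Integrable g μ) {p q : ℝ} (hp : 0 ≤ p) (hq : 0 ≤ q)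
    (hpq : p + q = 1) :
    ∫ a, f a ^ p * g a ^ q ∂μ ≤ (∫ a, f a ∂μ) ^ p * (∫ a, g a ∂μ) ^ q := by
  have hF : 0 ≤ ∫ a, f a ∂μ := integral_nonneg hf0
  have hG : 0 ≤ ∫ a, g a ∂μ := integral_nonneg hg0
  have hofReal : ∀ a, ENNReal.ofReal (f a ^ p * g a ^ q)
      = ENNReal.ofReal (f a) ^ p * ENNReal.ofReal (g a) ^ q := fun a => by
    rw [ENNReal.ofReal_mul (Real.rpow_nonneg (hf0 a) p), ENNReal.ofReal_rpow_of_nonneg (hf0 a) hp,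
      ENNReal.ofReal_rpow_of_nonneg (hg0 a) hq]
  have hmeas : AEStronglyMeasurable (fun a => f a ^ p * g a ^ q) μ :=
    ((hf.1.aemeasurable.pow_const p).mul (hg.1.aemeasurable.pow_const q)).aestronglyMeasurable
  rw [integral_eq_lintegral_of_nonneg_ae (ae_of_all _ fun a =>
    mul_nonneg (Real.rpow_nonneg (hf0 a) p) (Real.rpow_nonneg (hg0 a) q)) hmeas]
  refine ENNReal.toReal_le_of_le_ofReal
    (mul_nonneg (Real.rpow_nonneg hF p) (Real.rpow_nonneg hG q)) ?_
  calc ∫⁻ a, ENNReal.ofReal (f a ^ p * g a ^ q) ∂μ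
      = ∫⁻ a, ENNReal.ofReal (f a) ^ p * ENNReal.ofReal (g a) ^ q ∂μ := by simp_rw [hofReal]
    _ ≤ (∫⁻ a, ENNReal.ofReal (f a) ∂μ) ^ p * (∫⁻ a, ENNReal.ofReal (g a) ∂μ) ^ q :=
      ENNReal.lintegral_mul_norm_pow_le hf.1.aemeasurable.ennreal_ofReal
        hg.1.aemeasurable.ennreal_ofReal hp hq hpq
    _ = ENNReal.ofReal ((∫ a, f a ∂μ) ^ p * (∫ a, g a ∂μ) ^ q) := by
      rw [← ofReal_integral_eq_lintegral_ofReal hf (ae_of_all _ hf0),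
        ← ofReal_integral_eq_lintegral_ofReal hg (ae_of_all _ hg0),
        ENNReal.ofReal_mul (Real.rpow_nonneg hF p), ENNReal.ofReal_rpow_of_nonneg hF hp,
        ENNReal.ofReal_rpow_of_nonneg hG hq]

theorem integral_rpow_le_interpolation {f : α → ℝ} (hf0 : ∀ a, 0 ≤ f a) (hf : Integrable f μ)
    {r t : ℝ} (hft : Integrable (fun a => f a ^ t) μ) (hr : 1 ≤ r) (hrt : r ≤ t) (ht : 1 < t) :
    ∫ a, f a ^ r ∂μ ≤
      (∫ a, f a ∂μ) ^ ((t - r) / (t - 1)) * (∫ a, f a ^ t ∂μ) ^ ((r - 1) / (t - 1)) := by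
  have ht1 : 0 < t - 1 := by linarith
  have hexp : (t - r) / (t - 1) + t * ((r - 1) / (t - 1)) = r := by field_simp; ring
  have hsplit : ∀ a, f a ^ r = f a ^ ((t - r) / (t - 1)) * (f a ^ t) ^ ((r - 1) / (t - 1)) :=
    fun a => by
      rw [← Real.rpow_mul (hf0 a), ← Real.rpow_add' (hf0 a) (by linarith), hexp]
  simp_rw [hsplit]
  exact integral_rpow_mul_rpow_le hf0 (fun a => Real.rpow_nonneg (hf0 a) t) hf hft
    (div_nonneg (by linarith) ht1.le) (div_nonneg (by linarith) ht1.le) (by field_simp; ring)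

theorem setIntegral_le_integral_rpow_mul_measureReal [IsFiniteMeasure μ] {f : α → ℝ}
    (hf0 : ∀ a, 0 ≤ f a) {t : ℝ} (hft : Integrable (fun a => f a ^ t) μ) (ht : 1 < t)
    {s : Set α} (hs : MeasurableSet s) :
    ∫ a in s, f a ∂μ ≤ (∫ a, f a ^ t ∂μ) ^ (1 / t) * μ.real s ^ ((t - 1) / t) := by
  have ht0 : 0 < t := by linarith
  have hind : ∀ a, (f a ^ t) ^ (1 / t) * s.indicator (1 : α → ℝ) a ^ ((t - 1) / t)
      = s.indicator f a := fun a => by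
    by_cases ha : a ∈ s
    · simp [ha, ← Real.rpow_mul (hf0 a), ht0.ne']
    · simp [ha, Real.zero_rpow (div_pos (sub_pos.2 ht) ht0).ne']
  have h1 : Integrable (s.indicator (1 : α → ℝ)) μ := (integrable_const 1).indicator hs
  calc ∫ a in s, f a ∂μ
      = ∫ a, (f a ^ t) ^ (1 / t) * s.indicator (1 : α → ℝ) a ^ ((t - 1) / t) ∂μ := by
        simp_rw [hind, integral_indicator hs]
    _ ≤ (∫ a, f a ^ t ∂μ) ^ (1 / t) * (∫ a, s.indicator (1 : α → ℝ) a ∂μ) ^ ((t - 1) / t) :=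
      integral_rpow_mul_rpow_le (fun a => Real.rpow_nonneg (hf0 a) t)
        (Set.indicator_nonneg fun _ _ => zero_le_one) hft h1 (by positivity)
        (div_nonneg (by linarith) ht0.le) (by field_simp; ring)
    _ = (∫ a, f a ^ t ∂μ) ^ (1 / t) * μ.real s ^ ((t - 1) / t) := by
      rw [integral_indicator_one hs]

theorem setIntegral_abs_nonneg_eq_half {f : α → ℝ} (hfm : Measurable f) (hf : Integrable f μ)
    (hmean : ∫ a, f a ∂μ = 0) :
    ∫ a in {a | 0 ≤ f a}, |f a| ∂μ = (∫ a, |f a| ∂μ) / 2 := by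
  set A := {a | 0 ≤ f a}
  have hA : MeasurableSet A := measurableSet_le measurable_const hfm
  have hpos : ∫ a in A, |f a| ∂μ = ∫ a in A, f a ∂μ :=
    setIntegral_congr_fun hA fun a ha => abs_of_nonneg ha
  have hneg : ∫ a in Aᶜ, |f a| ∂μ = -∫ a in Aᶜ, f a ∂μ := by
    rw [← integral_neg]
    exact setIntegral_congr_fun hA.compl fun a ha => abs_of_neg (not_le.1 ha)
  have hsum := integral_add_compl hA hf
  have hsum_abs := integral_add_compl hA hf.abs
  linarith

theorem rpow_le_integral_abs_of_moment_bounds {f : α → ℝ} (hf : Integrable f μ) {t τ : ℝ}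
    (ht : 2 < t) (hτ : 0 < τ) (hft : Integrable (fun a => |f a| ^ t) μ)
    (hvar : ∫ a, f a ^ 2 ∂μ = 1) (hmom : ∫ a, |f a| ^ t ∂μ ≤ τ) :
    τ ^ (-1 / (t - 2)) ≤ ∫ a, |f a| ∂μ := by
  have ht1 : t - 1 ≠ 0 := by linarith
  have ht2 : t - 2 ≠ 0 := by linarith
  have hM : 0 ≤ ∫ a, |f a| ∂μ := integral_nonneg fun a => abs_nonneg _
  have hθ : 0 < (t - 2) / (t - 1) := div_pos (by linarith) (by linarith)
  have hsq : ∫ a, |f a| ^ (2 : ℝ) ∂μ = 1 := by simpa [Real.rpow_two, sq_abs] using hvar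
  have h1 : 1 ≤ (∫ a, |f a| ∂μ) ^ ((t - 2) / (t - 1)) * τ ^ (1 / (t - 1)) := by
    calc (1 : ℝ) = ∫ a, |f a| ^ (2 : ℝ) ∂μ := hsq.symm
      _ ≤ (∫ a, |f a| ∂μ) ^ ((t - 2) / (t - 1)) * (∫ a, |f a| ^ t ∂μ) ^ ((2 - 1) / (t - 1)) :=
        integral_rpow_le_interpolation (fun a => abs_nonneg _) hf.abs hft one_le_two ht.le
          (by linarith)
      _ ≤ (∫ a, |f a| ∂μ) ^ ((t - 2) / (t - 1)) * τ ^ (1 / (t - 1)) := by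
        rw [show (2 : ℝ) - 1 = 1 by norm_num]
        gcongr
        exact one_div_nonneg.2 (by linarith)
  have h2 : τ ^ (-1 / (t - 1)) ≤ (∫ a, |f a| ∂μ) ^ ((t - 2) / (t - 1)) := by
    rw [div_eq_mul_inv, neg_one_mul, Real.rpow_neg hτ.le, ← one_div, ← one_div,
      div_le_iff₀ (by positivity)]
    exact h1
  have hτ' : τ ^ (-1 / (t - 2)) = (τ ^ (-1 / (t - 1))) ^ ((t - 2) / (t - 1))⁻¹ := by
    rw [← Real.rpow_mul hτ.le]
    congr 1
    field_simp
  rw [hτ', Real.rpow_inv_le_iff_of_pos (by positivity) hM hθ]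
  exact h2

theorem quarter_mul_rpow_lt_measureReal_nonneg [IsFiniteMeasure μ] {f : α → ℝ} {t τ : ℝ}
    (ht : 2 < t) (hτ : 0 < τ) (hfm : Measurable f) (hft : Integrable (fun a => |f a| ^ t) μ)
    (hmean : ∫ a, f a ∂μ = 0) (hvar : ∫ a, f a ^ 2 ∂μ = 1) (hmom : ∫ a, |f a| ^ t ∂μ ≤ τ) :
    0.25 * τ ^ (-2 / (t - 2)) < μ.real {a | 0 ≤ f a} := by
  have hf : Integrable f μ := by
    have h := integrable_norm_rpow_of_le (q := t) hfm.aestronglyMeasurable zero_le_one (by linarith)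
      (by linarith) (by simpa only [Real.norm_eq_abs] using hft)
    simpa only [Real.rpow_one, integrable_norm_iff hfm.aestronglyMeasurable] using h
  refine quarter_mul_rpow_lt_of_bounds ht hτ measureReal_nonneg
    (rpow_le_integral_abs_of_moment_bounds hf ht hτ hft hvar hmom) ?_
  calc (∫ a, |f a| ∂μ) / 2 = ∫ a in {a | 0 ≤ f a}, |f a| ∂μ :=
        (setIntegral_abs_nonneg_eq_half hfm hf hmean).symm
    _ ≤ (∫ a, |f a| ^ t ∂μ) ^ (1 / t) * μ.real {a | 0 ≤ f a} ^ ((t - 1) / t) :=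
      setIntegral_le_integral_rpow_mul_measureReal (fun a => abs_nonneg _) hft (by linarith)
        (measurableSet_le measurable_const hfm)
    _ ≤ τ ^ (1 / t) * μ.real {a | 0 ≤ f a} ^ ((t - 1) / t) := by gcongr

end

theorem stmt_0_general {Ω : Type*} [MeasureSpace Ω] [IsProbabilityMeasure (volume : Measure Ω)]
    (Φ : Ω → ℝ) (t τ : ℝ) (ht : 2 < t) (hτ : 0 < τ)
    (hmeas : Measurable Φ)
    (hintt : Integrable (fun ω => |Φ ω| ^ t))
    (hmean : ∫ ω, Φ ω = 0)
    (hvar : ∫ ω, (Φ ω) ^ 2 = 1)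
    (hmom : ∫ ω, |Φ ω| ^ t ≤ τ) :
    ((volume : Measure Ω) {ω | 0 ≤ Φ ω}).toReal > 0.25 * τ ^ (-2 / (t - 2)) ∧
      ((volume : Measure Ω) {ω | Φ ω ≤ 0}).toReal > 0.25 * τ ^ (-2 / (t - 2)) := by
  refine ⟨quarter_mul_rpow_lt_measureReal_nonneg ht hτ hmeas hintt hmean hvar hmom, ?_⟩
  have h := quarter_mul_rpow_lt_measureReal_nonneg (f := fun ω => -Φ ω) ht hτ hmeas.neg
    (by simpa only [abs_neg] using hintt) (by rw [integral_neg, hmean, neg_zero])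
    (by simpa only [neg_sq] using hvar) (by simpa only [abs_neg] using hmom)
  simpa only [neg_nonneg, measureReal_def] using h

theorem stmt_0 {Ω : Type*} [MeasureSpace Ω] [IsProbabilityMeasure (volume : Measure Ω)]
    (Φ : Ω → ℝ) (t τ : ℝ) (ht : 2 < t) (hτ : 0 < τ)
    (hmeas : Measurable Φ)
    (hint2 : Integrable (fun ω => (Φ ω) ^ 2))
    (hintt : Integrable (fun ω => |Φ ω| ^ t))
    (hmean : ∫ ω, Φ ω = 0)
    (hvar : ∫ ω, (Φ ω) ^ 2 = 1)
    (hmom : ∫ ω, |Φ ω| ^ t ≤ τ) :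
    ((volume : Measure Ω) {ω | 0 ≤ Φ ω}).toReal > 0.25 * τ ^ (-2 / (t - 2)) ∧
      ((volume : Measure Ω) {ω | Φ ω ≤ 0}).toReal > 0.25 * τ ^ (-2 / (t - 2)) :=
  stmt_0_general Φ t τ ht hτ hmeas hintt hmean hvar hmom
end

section
/- Let Φ be a real random variable with EΦ = 0, Var(Φ) = 1, and EΦ⁴ ≤ τ. Then Prob{Φ ≥ 0} ≥ (2√3 − 3)/τ and Prob{Φ ≤ 0} ≥ (2√3 − 3)/τ. -/
open MeasureTheory

/-- Pointwise polynomial bound, upper branch. -/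
lemma poly_upper (r v x : ℝ) (hr : r ^ 2 = 3) (hr1 : 1 ≤ r) :
    (2 * r - 3) * (2 * v ^ 3 * x + 3 * v ^ 2 * x ^ 2 - x ^ 4) ≤ (9 / 4) * v ^ 4 := by
  have hid : (9 / 4) * v ^ 4 - (2 * r - 3) * (2 * v ^ 3 * x + 3 * v ^ 2 * x ^ 2 - x ^ 4)
      = ((2 * r - 3) * (2 * x - (1 + r) * v) ^ 2 * (2 * x + (1 + r) * v) ^ 2
        + 4 * ((2 * r - 3) * (r - 1)) * (v ^ 2 * (2 * x - (1 + r) * v) ^ 2)) / 16 := by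
    linear_combination (-r ^ 3 * v ^ 4 / 8 - 13 * r ^ 2 * v ^ 4 / 16 - r * v ^ 4 / 8
      + 2 * r * v ^ 3 * x + r * v ^ 2 * x ^ 2 - 9 * v ^ 4 / 16 - 3 * v ^ 3 * x
      - 3 / 2 * v ^ 2 * x ^ 2) * hr
  have h23 : 0 ≤ 2 * r - 3 := by nlinarith
  have h1 : 0 ≤ (2 * r - 3) * (2 * x - (1 + r) * v) ^ 2 * (2 * x + (1 + r) * v) ^ 2 :=
    mul_nonneg (mul_nonneg h23 (sq_nonneg _)) (sq_nonneg _)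
  have h2 : 0 ≤ 4 * ((2 * r - 3) * (r - 1)) * (v ^ 2 * (2 * x - (1 + r) * v) ^ 2) :=
    mul_nonneg (by nlinarith) (mul_nonneg (sq_nonneg _) (sq_nonneg _))
  linarith

/-- Pointwise polynomial bound, negative branch. -/
lemma poly_neg (v x : ℝ) (hv : 0 ≤ v) (hx : x < 0) :
    2 * v ^ 3 * x + 3 * v ^ 2 * x ^ 2 - x ^ 4 ≤ 0 := by
  nlinarith [mul_nonneg (mul_nonneg (by linarith : (0:ℝ) ≤ -x) (by linarith : (0:ℝ) ≤ 2 * v - x)) (sq_nonneg (x + v))]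

/-- One-sided version. -/
lemma one_side {Ω : Type*} [MeasureSpace Ω] [IsProbabilityMeasure (volume : Measure Ω)]
    (Φ : Ω → ℝ) (τ : ℝ) (hτ : 0 < τ)
    (hmeas : Measurable Φ)
    (hint2 : Integrable (fun ω => (Φ ω) ^ 2))
    (hint4 : Integrable (fun ω => (Φ ω) ^ 4))
    (hmean : ∫ ω, Φ ω = 0)
    (hvar : ∫ ω, (Φ ω) ^ 2 = 1)
    (hmom : ∫ ω, (Φ ω) ^ 4 ≤ τ) :
    ((volume : Measure Ω) {ω | 0 ≤ Φ ω}).toReal ≥ (2 * Real.sqrt 3 - 3) / τ := by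
  set r : ℝ := Real.sqrt 3 with hrdef
  have hr : r ^ 2 = 3 := Real.sq_sqrt (by norm_num)
  have hr1 : 1 ≤ r := by
    rw [hrdef, show (1:ℝ) = Real.sqrt 1 by simp]
    exact Real.sqrt_le_sqrt (by norm_num)
  set v : ℝ := Real.sqrt (2 * τ / 3) with hvdef
  have hv0 : 0 ≤ v := Real.sqrt_nonneg _
  have hv2 : v ^ 2 = 2 * τ / 3 := Real.sq_sqrt (by linarith)
  set c : ℝ := (2 * r - 3) / τ ^ 2 with hcdef
  have h23 : 0 < 2 * r - 3 := by nlinarith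
  have hc : 0 < c := by positivity
  -- integrability of Φ
  have hb : Integrable (fun ω => 1 + (Φ ω) ^ 2) := (integrable_const (1:ℝ)).add hint2
  have hint1 : Integrable Φ := by
    refine hb.mono' hmeas.aestronglyMeasurable (ae_of_all _ fun ω => ?_)
    simp only [Real.norm_eq_abs]
    nlinarith [sq_abs (Φ ω), sq_nonneg (|Φ ω| - 1)]
  -- the set
  have hS : MeasurableSet {ω | 0 ≤ Φ ω} := measurableSet_le measurable_const hmeas
  -- the polynomial function
  set f : Ω → ℝ := fun ω => c * (2 * v ^ 3 * Φ ω + 3 * v ^ 2 * (Φ ω) ^ 2 - (Φ ω) ^ 4) with hfdef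
  have hintf : Integrable f := by
    apply Integrable.const_mul
    exact ((hint1.const_mul _).add (hint2.const_mul _)).sub hint4
  set g : Ω → ℝ := Set.indicator {ω | 0 ≤ Φ ω} (1 : Ω → ℝ) with hgdef
  have hintg : Integrable g := (integrable_const (1:ℝ)).indicator hS
  have hfg : ∀ ω, f ω ≤ g ω := by
    intro ω
    by_cases h : 0 ≤ Φ ω
    · have hg1 : g ω = 1 :=
        Set.indicator_of_mem (show ω ∈ {ω | 0 ≤ Φ ω} from h) (1 : Ω → ℝ)
      rw [hg1]
      show c * (2 * v ^ 3 * Φ ω + 3 * v ^ 2 * (Φ ω) ^ 2 - (Φ ω) ^ 4) ≤ 1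
      have key := poly_upper r v (Φ ω) hr hr1
      have hv4 : (9 / 4) * v ^ 4 = τ ^ 2 := by
        have h4 : v ^ 4 = (v ^ 2) ^ 2 := by ring
        rw [h4, hv2]; ring
      rw [hv4] at key
      rw [hcdef, div_mul_eq_mul_div, div_le_one (by positivity)]
      nlinarith [key]
    · have hg0 : g ω = 0 :=
        Set.indicator_of_notMem (show ω ∉ {ω | 0 ≤ Φ ω} from h) (1 : Ω → ℝ)
      rw [hg0]
      show c * (2 * v ^ 3 * Φ ω + 3 * v ^ 2 * (Φ ω) ^ 2 - (Φ ω) ^ 4) ≤ 0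
      have key := poly_neg v (Φ ω) hv0 (not_le.mp h)
      exact mul_nonpos_of_nonneg_of_nonpos hc.le key
  have hmono : ∫ ω, f ω ≤ ∫ ω, g ω := integral_mono hintf hintg hfg
  have hgint : ∫ ω, g ω = ((volume : Measure Ω) {ω | 0 ≤ Φ ω}).toReal := by
    rw [hgdef]
    exact integral_indicator_one hS
  have hfint : ∫ ω, f ω = c * (2 * v ^ 3 * 0 + 3 * v ^ 2 * 1 - ∫ ω, (Φ ω) ^ 4) := by
    rw [hfdef]
    rw [show (∫ ω, (fun ω => c * (2 * v ^ 3 * Φ ω + 3 * v ^ 2 * (Φ ω) ^ 2 - (Φ ω) ^ 4)) ω)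
      = ∫ ω, c * (2 * v ^ 3 * Φ ω + 3 * v ^ 2 * (Φ ω) ^ 2 - (Φ ω) ^ 4) from rfl,
      integral_const_mul]
    congr 1
    have i1 : Integrable (fun ω => 2 * v ^ 3 * Φ ω) := hint1.const_mul _
    have i2 : Integrable (fun ω => 3 * v ^ 2 * (Φ ω) ^ 2) := hint2.const_mul _
    rw [integral_sub (f := fun ω => 2 * v ^ 3 * Φ ω + 3 * v ^ 2 * (Φ ω) ^ 2)
        (g := fun ω => (Φ ω) ^ 4) (i1.add i2) hint4,
      integral_add (f := fun ω => 2 * v ^ 3 * Φ ω) (g := fun ω => 3 * v ^ 2 * (Φ ω) ^ 2) i1 i2,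
      integral_const_mul, integral_const_mul, hmean, hvar]
  have hlb : (2 * r - 3) / τ ≤ ∫ ω, f ω := by
    rw [hfint]
    have h3v2 : 3 * v ^ 2 = 2 * τ := by rw [hv2]; ring
    have heq : c * (2 * v ^ 3 * 0 + 3 * v ^ 2 * 1 - ∫ ω, (Φ ω) ^ 4)
        = c * (2 * τ - ∫ ω, (Φ ω) ^ 4) := by rw [← h3v2]; ring
    rw [heq]
    have h1 : c * τ ≤ c * (2 * τ - ∫ ω, (Φ ω) ^ 4) := by
      apply mul_le_mul_of_nonneg_left _ hc.le
      linarith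
    have h2 : (2 * r - 3) / τ = c * τ := by
      rw [hcdef]; field_simp
    linarith
  rw [ge_iff_le, ← hgint]
  linarith

theorem stmt_1 {Ω : Type*} [MeasureSpace Ω] [IsProbabilityMeasure (volume : Measure Ω)]
    (Φ : Ω → ℝ) (τ : ℝ) (hτ : 0 < τ)
    (hmeas : Measurable Φ)
    (hint2 : Integrable (fun ω => (Φ ω) ^ 2))
    (hint4 : Integrable (fun ω => (Φ ω) ^ 4))
    (hmean : ∫ ω, Φ ω = 0)
    (hvar : ∫ ω, (Φ ω) ^ 2 = 1)
    (hmom : ∫ ω, (Φ ω) ^ 4 ≤ τ) :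
    ((volume : Measure Ω) {ω | 0 ≤ Φ ω}).toReal ≥ (2 * Real.sqrt 3 - 3) / τ ∧
      ((volume : Measure Ω) {ω | Φ ω ≤ 0}).toReal ≥ (2 * Real.sqrt 3 - 3) / τ := by
  constructor
  · exact one_side Φ τ hτ hmeas hint2 hint4 hmean hvar hmom
  · have e2 : (fun ω => (-Φ ω) ^ 2) = fun ω => (Φ ω) ^ 2 := by funext ω; ring
    have e4 : (fun ω => (-Φ ω) ^ 4) = fun ω => (Φ ω) ^ 4 := by funext ω; ring
    have h := one_side (fun ω => -Φ ω) τ hτ hmeas.neg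
      (by rw [e2]; exact hint2) (by rw [e4]; exact hint4)
      (by rw [show (∫ ω, -Φ ω) = ∫ ω, -(Φ ω) from rfl, integral_neg, hmean, neg_zero])
      (by rw [e2]; exact hvar) (by rw [e4]; exact hmom)
    have hset : {ω | 0 ≤ -Φ ω} = {ω | Φ ω ≤ 0} := by
      ext ω; simp [neg_nonneg]
    rwa [hset] at h
end

section
/- Let w_{ij} (1 ≤ i < j ≤ n) be real numbers, not all zero, and let ξ₁,…,ξₙ be i.i.d. Rademacher random variables (taking values ±1 with probability 1/2 each). Then Prob{ Σ_{i<j} w_{ij} ξᵢ ξⱼ ≤ 0 } > 1/87. -/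
/-!
Write `Ψ = ∑_{i<j} w i j ξᵢ ξⱼ` as a Walsh series `∑_E a E χ_E` on the cube `{±1}ⁿ`, with
coefficients supported on 2-element sets. Then `𝔼 Ψ = a ∅ = 0` and `𝔼 Ψ² = σ² := ∑ a E ²`.
The Walsh coefficients of `Ψ²` are `(a ⋆ a) D = ∑_E a E a (E ∆ D)`, so by Parseval
`𝔼 Ψ⁴ = ∑_D (a ⋆ a) D ²`; only `|D| = 0, 2, 4` contribute, and Cauchy–Schwarz bounds the three
parts by `σ⁴`, `8 σ⁴` and `6 σ⁴`. Finally, for a centred variable Cauchy–Schwarz and the moment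
interpolation `(𝔼 Ψ²)³ ≤ (𝔼 |Ψ|)² 𝔼 Ψ⁴` give the Paley–Zygmund type bound
`ℙ (Ψ ≤ 0) ≥ (𝔼 Ψ²)² / (4 𝔼 Ψ⁴) ≥ 1/60`.
-/

open Finset
open scoped symmDiff

namespace RademacherChaos

section Moments

variable {ι : Type*} (s : Finset ι) (f : ι → ℝ)

lemma sum_sq_pow_three_le : (∑ i ∈ s, f i ^ 2) ^ 3 ≤ (∑ i ∈ s, |f i|) ^ 2 * ∑ i ∈ s, f i ^ 4 := by
  set M₁ := ∑ i ∈ s, |f i|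
  set M₂ := ∑ i ∈ s, f i ^ 2
  set M₃ := ∑ i ∈ s, |f i| ^ 3
  set M₄ := ∑ i ∈ s, f i ^ 4
  have h₁₃ : M₂ ^ 2 ≤ M₁ * M₃ := sum_sq_le_sum_mul_sum_of_sq_le_mul s
    (fun i _ => abs_nonneg _) (fun i _ => by positivity) fun i _ => by
      rw [← sq_abs (f i)]; exact le_of_eq (by ring)
  have h₂₄ : M₃ ^ 2 ≤ M₂ * M₄ := sum_sq_le_sum_mul_sum_of_sq_le_mul s
    (fun i _ => sq_nonneg _) (fun i _ => by positivity) fun i _ => by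
      rw [show f i ^ 4 = (f i ^ 2) ^ 2 by ring, ← sq_abs (f i)]; exact le_of_eq (by ring)
  have hM₂ : 0 ≤ M₂ := sum_nonneg fun i _ => sq_nonneg _
  rcases hM₂.eq_or_lt with h | h
  · rw [← h, zero_pow three_ne_zero]
    positivity
  · refine le_of_mul_le_mul_right ?_ h
    calc M₂ ^ 3 * M₂ = (M₂ ^ 2) ^ 2 := by ring
      _ ≤ (M₁ * M₃) ^ 2 := pow_le_pow_left₀ (sq_nonneg _) h₁₃ 2
      _ = M₁ ^ 2 * M₃ ^ 2 := by ring
      _ ≤ M₁ ^ 2 * (M₂ * M₄) := mul_le_mul_of_nonneg_left h₂₄ (sq_nonneg _)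
      _ = M₁ ^ 2 * M₄ * M₂ := by ring

lemma sum_abs_eq_two_mul_sum_filter_nonpos (hf : ∑ i ∈ s, f i = 0) :
    ∑ i ∈ s, |f i| = 2 * ∑ i ∈ s with f i ≤ 0, -f i := by
  have hneg : ∑ i ∈ s with f i ≤ 0, |f i| = ∑ i ∈ s with f i ≤ 0, -f i :=
    sum_congr rfl fun i hi => abs_of_nonpos (mem_filter.1 hi).2
  have hpos : ∑ i ∈ s with ¬f i ≤ 0, |f i| = ∑ i ∈ s with ¬f i ≤ 0, f i :=
    sum_congr rfl fun i hi => abs_of_pos (not_le.1 (mem_filter.1 hi).2)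
  have hzero := sum_filter_add_sum_filter_not s (fun i => f i ≤ 0) f
  rw [← sum_filter_add_sum_filter_not s (fun i => f i ≤ 0), hneg, hpos]
  rw [hf, sum_neg_distrib] at *
  linarith

lemma sq_sum_sq_le_four_mul_card_nonpos_mul_sum_pow_four (hf : ∑ i ∈ s, f i = 0) :
    (∑ i ∈ s, f i ^ 2) ^ 2 ≤ 4 * #{i ∈ s | f i ≤ 0} * ∑ i ∈ s, f i ^ 4 := by
  have hmom := sum_sq_pow_three_le s f
  rw [sum_abs_eq_two_mul_sum_filter_nonpos s f hf] at hmom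
  set M₂ := ∑ i ∈ s, f i ^ 2
  set M₄ := ∑ i ∈ s, f i ^ 4
  set A := ∑ i ∈ s with f i ≤ 0, -f i
  set N : ℝ := ((#{i ∈ s | f i ≤ 0} : ℕ) : ℝ)
  have hsub : ∑ i ∈ s with f i ≤ 0, (-f i) ^ 2 ≤ M₂ := by
    simp only [neg_sq]
    exact sum_le_sum_of_subset_of_nonneg (filter_subset _ s) fun i _ _ => sq_nonneg (f i)
  have hcs : A ^ 2 ≤ N * M₂ :=
    sq_sum_le_card_mul_sum_sq.trans (mul_le_mul_of_nonneg_left hsub (Nat.cast_nonneg _))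
  have hM₄ : 0 ≤ M₄ := sum_nonneg fun i _ => by positivity
  have hM₂ : 0 ≤ M₂ := sum_nonneg fun i _ => sq_nonneg (f i)
  rcases hM₂.eq_or_lt with h | h
  · rw [← h, sq, zero_mul]; positivity
  · refine le_of_mul_le_mul_right ?_ h
    calc M₂ ^ 2 * M₂ = M₂ ^ 3 := by ring
      _ ≤ 4 * A ^ 2 * M₄ := by linarith
      _ ≤ 4 * (N * M₂) * M₄ := by gcongr
      _ = 4 * N * M₄ * M₂ := by ring

end Moments

section Walsh

variable {α : Type*} [Fintype α] [DecidableEq α]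

def boolSign (b : Bool) : ℝ := if b then 1 else -1

lemma boolSign_mul_self (b : Bool) : boolSign b * boolSign b = 1 := by
  cases b <;> norm_num [boolSign]

def walsh (D : Finset α) (s : α → Bool) : ℝ := ∏ i ∈ D, boolSign (s i)

lemma walsh_mul_walsh (D E : Finset α) (s : α → Bool) :
    walsh D s * walsh E s = walsh (D ∆ E) s := by
  have hunion : walsh (D ∪ E) s = walsh (D ∆ E) s * walsh (D ∩ E) s := by
    have hsplit : D ∪ E = D ∆ E ∪ D ∩ E := (symmDiff_sup_inf D E).symm
    have hdisj : Disjoint (D ∆ E) (D ∩ E) := disjoint_symmDiff_inf D E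
    rw [walsh, hsplit, prod_union hdisj]
    rfl
  have hinter : walsh (D ∩ E) s * walsh (D ∩ E) s = 1 := by
    rw [walsh, ← prod_mul_distrib]
    exact prod_eq_one fun i _ => boolSign_mul_self (s i)
  calc walsh D s * walsh E s = walsh (D ∪ E) s * walsh (D ∩ E) s := prod_union_inter.symm
    _ = walsh (D ∆ E) s := by rw [hunion, mul_assoc, hinter, mul_one]

lemma sum_walsh (D : Finset α) :
    ∑ s : α → Bool, walsh D s = if D = ∅ then 2 ^ Fintype.card α else 0 := by
  have hfactor : ∑ s : α → Bool, walsh D s = ∏ i, ∑ b : Bool, if i ∈ D then boolSign b else 1 := by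
    rw [Fintype.prod_sum]
    exact sum_congr rfl fun s _ => ((prod_ite_mem univ D _).trans (by rw [univ_inter]; rfl)).symm
  rw [hfactor]
  split_ifs with hD
  · simp [hD]
  · obtain ⟨i, hi⟩ := nonempty_iff_ne_empty.2 hD
    exact prod_eq_zero (mem_univ i) (by simp [hi, boolSign])

lemma sum_walsh_mul_walsh (D E : Finset α) :
    ∑ s : α → Bool, walsh D s * walsh E s = if D = E then 2 ^ Fintype.card α else 0 := by
  simp_rw [walsh_mul_walsh, sum_walsh, symmDiff_eq_empty]

lemma sum_symmDiff_right {M : Type*} [AddCommMonoid M] (E : Finset α) (g : Finset α → M) :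
    ∑ D, g (E ∆ D) = ∑ D, g D :=
  Equiv.sum_comp ((symmDiff_right_involutive E).toPerm _) g

def walshSeries (a : Finset α → ℝ) (s : α → Bool) : ℝ := ∑ D, a D * walsh D s

def symmDiffConv (a b : Finset α → ℝ) (D : Finset α) : ℝ := ∑ E, a E * b (E ∆ D)

lemma sum_walshSeries (a : Finset α → ℝ) :
    ∑ s, walshSeries a s = 2 ^ Fintype.card α * a ∅ := by
  simp_rw [walshSeries]
  rw [sum_comm]
  simp_rw [← mul_sum, sum_walsh, mul_ite, mul_zero, sum_ite_eq', mem_univ, if_true, mul_comm]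

lemma sum_walshSeries_mul_walshSeries (a b : Finset α → ℝ) :
    ∑ s, walshSeries a s * walshSeries b s = 2 ^ Fintype.card α * ∑ D, a D * b D := by
  simp_rw [walshSeries, sum_mul_sum, sum_comm (s := univ (α := α → Bool)), mul_mul_mul_comm,
    ← mul_sum, sum_walsh_mul_walsh, mul_ite, mul_zero, sum_ite_eq, mem_univ, if_true, mul_sum]
  exact sum_congr rfl fun D _ => by ring

lemma walshSeries_mul_walshSeries (a b : Finset α → ℝ) (s : α → Bool) :
    walshSeries a s * walshSeries b s = walshSeries (symmDiffConv a b) s := by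
  have hreindex : ∀ E, ∑ F, b F * walsh (E ∆ F) s = ∑ D, b (E ∆ D) * walsh D s := fun E => by
    rw [← sum_symmDiff_right E fun D => b (E ∆ D) * walsh D s]
    simp only [symmDiff_symmDiff_cancel_left]
  simp_rw [walshSeries, symmDiffConv, sum_mul_sum, mul_mul_mul_comm, walsh_mul_walsh]
  calc ∑ E, ∑ F, a E * b F * walsh (E ∆ F) s = ∑ E, a E * ∑ D, b (E ∆ D) * walsh D s := by
        simp_rw [mul_assoc, ← mul_sum, hreindex]
    _ = ∑ D, (∑ E, a E * b (E ∆ D)) * walsh D s := by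
        simp_rw [mul_sum, sum_mul, mul_assoc]
        exact sum_comm

end Walsh

section Pairs

variable {α : Type*} {f : Finset α → ℝ}

lemma apply_singleton_eq_zero (hf : ∀ E, #E ≠ 2 → f E = 0) (x : α) : f {x} = 0 :=
  hf _ (by simp)

variable [DecidableEq α]

lemma card_symmDiff_add_two_mul_card_inter (E F : Finset α) :
    #(E ∆ F) + 2 * #(E ∩ F) = #E + #F := by
  rw [symmDiff_eq_sup_sdiff_inf E F, sup_eq_union, inf_eq_inter,
    card_sdiff_of_subset inter_subset_union, ← card_union_add_card_inter E F]
  have := card_le_card (inter_subset_union (s := E) (t := F))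
  omega

variable [Fintype α]

lemma filter_pair_eq_pair (x y : α) :
    ({p : α × α | ({p.1, p.2} : Finset α) = {x, y}} : Finset (α × α)) = {(x, y), (y, x)} := by
  ext ⟨u, v⟩
  simp only [mem_filter, mem_univ, true_and, mem_insert, mem_singleton, Prod.mk.injEq,
    ← coe_inj, coe_pair, Set.pair_eq_pair_iff]

lemma sum_sum_pair_eq_two_mul_sum (hf : ∀ E, #E ≠ 2 → f E = 0) : ∑ x, ∑ y, f {x, y} = 2 * ∑ E, f E := by
  rw [← Fintype.sum_prod_type', ← sum_fiberwise univ (fun p : α × α => ({p.1, p.2} : Finset α)),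
    mul_sum]
  refine sum_congr rfl fun E _ => ?_
  rw [sum_congr rfl fun p hp => congrArg f (mem_filter.1 hp).2, sum_const, nsmul_eq_mul]
  by_cases hE : #E = 2
  · obtain ⟨x, y, hxy, rfl⟩ := card_eq_two.1 hE
    rw [filter_pair_eq_pair, card_pair fun h => hxy (congrArg Prod.fst h)]
    norm_num
  · rw [hf E hE, mul_zero, mul_zero]

lemma sum_filter_mem_eq_sum_pair (hf : ∀ E, #E ≠ 2 → f E = 0) (u : α) :
    ∑ E with u ∈ E, f E = ∑ c, f {u, c} := by
  have hg : ∀ E : Finset α, #E ≠ 2 → (if u ∈ E then f E else 0) = 0 := fun E hE => by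
    simp [hf E hE]
  have hsplit : ∀ x y : α, (if u ∈ ({x, y} : Finset α) then f {x, y} else 0)
      = (if x = u then f {u, y} else 0) + (if y = u then f {u, x} else 0) := fun x y => by
    by_cases hx : x = u <;> by_cases hy : y = u
    · subst hx hy; simp [apply_singleton_eq_zero hf]
    · subst hx; simp [hy]
    · subst hy; simp [hx, pair_comm]
    · simp [hx, hy, Ne.symm hx, Ne.symm hy]
  have hfirst : ∑ x, ∑ y, (if x = u then f {u, y} else 0) = ∑ c, f {u, c} := by
    rw [sum_comm]; simp
  have hsecond : ∑ x, ∑ y, (if y = u then f {u, x} else 0) = ∑ c, f {u, c} := by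
    simp
  have htwice : 2 * ∑ E with u ∈ E, f E = 2 * ∑ c, f {u, c} := by
    rw [sum_filter, ← sum_sum_pair_eq_two_mul_sum hg]
    simp only [hsplit, sum_add_distrib, hfirst, hsecond]
    ring
  linarith

end Pairs

section PairSupported

variable {α : Type*} [Fintype α] [DecidableEq α] {a : Finset α → ℝ}

lemma symmDiffConv_self_empty : symmDiffConv a a ∅ = ∑ E, a E ^ 2 := by
  simp [symmDiffConv, sq, ← bot_eq_empty]

lemma card_eq_of_symmDiffConv_self_ne_zero (ha : ∀ E, #E ≠ 2 → a E = 0) {D : Finset α}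
    (hD : symmDiffConv a a D ≠ 0) : #D = 0 ∨ #D = 2 ∨ #D = 4 := by
  obtain ⟨E, -, hE⟩ := exists_ne_zero_of_sum_ne_zero hD
  have hE2 : #E = 2 := by_contra fun h => hE (by rw [ha E h, zero_mul])
  have hF2 : #(E ∆ D) = 2 := by_contra fun h => hE (by rw [ha _ h, mul_zero])
  have hcard := card_symmDiff_add_two_mul_card_inter E (E ∆ D)
  rw [symmDiff_symmDiff_cancel_left] at hcard
  omega

lemma symmDiffConv_self_pair (ha : ∀ E, #E ≠ 2 → a E = 0) {u v : α} (huv : u ≠ v) :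
    symmDiffConv a a {u, v} = 2 * ∑ c, a {u, c} * a {v, c} := by
  set D : Finset α := {u, v} with hD
  have hu : u ∈ D := mem_insert_self u {v}
  have hg : ∀ E, #E ≠ 2 → a E * a (E ∆ D) = 0 := fun E hE => by rw [ha E hE, zero_mul]
  -- `E ↦ E ∆ D` exchanges the sets avoiding `u` with those containing it.
  have hswap : ∑ E with u ∉ E, a E * a (E ∆ D) = ∑ E with u ∈ E, a E * a (E ∆ D) := by
    refine sum_nbij' (· ∆ D) (· ∆ D) ?_ ?_ ?_ ?_ ?_ <;>
      simp [mem_symmDiff, hu, symmDiff_symmDiff_cancel_right, mul_comm]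
  have hterm : ∀ c, a {u, c} * a ({u, c} ∆ D) = a {u, c} * a {v, c} := fun c => by
    by_cases hcu : c = u
    · subst hcu; simp [apply_singleton_eq_zero ha]
    by_cases hcv : c = v
    · subst hcv; simp [apply_singleton_eq_zero ha, hD, ha ∅ (by simp)]
    · congr 2
      ext x
      simp only [hD, mem_symmDiff, mem_insert, mem_singleton]
      grind
  rw [symmDiffConv, ← sum_filter_add_sum_filter_not univ (u ∈ ·), hswap,
    sum_filter_mem_eq_sum_pair hg, sum_congr rfl fun c _ => hterm c]
  ring

lemma symmDiffConv_self_eq_sum_powersetCard (ha : ∀ E, #E ≠ 2 → a E = 0) {D : Finset α}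
    (hD : #D = 4) : symmDiffConv a a D = ∑ E ∈ D.powersetCard 2, a E * a (E ∆ D) := by
  refine (sum_subset (subset_univ _) fun E _ hE => ?_).symm
  by_cases hE2 : #E = 2
  · have hsub : ¬ E ⊆ D := fun h => hE (mem_powersetCard.2 ⟨h, hE2⟩)
    have hlt : #(E ∩ D) < #E :=
      card_lt_card ⟨inter_subset_left, fun h => hsub fun x hx => (mem_inter.1 (h hx)).2⟩
    have hcard := card_symmDiff_add_two_mul_card_inter E D
    rw [ha (E ∆ D) (by omega), mul_zero]
  · rw [ha E hE2, zero_mul]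

lemma sum_symmDiffConv_self_sq_card_four_le (ha : ∀ E, #E ≠ 2 → a E = 0) :
    ∑ D with #D = 4, symmDiffConv a a D ^ 2 ≤ 6 * (∑ E, a E ^ 2) ^ 2 := by
  have hD : ∀ D : Finset α, #D = 4 →
      symmDiffConv a a D ^ 2 ≤ 6 * ∑ E, (a E * a (E ∆ D)) ^ 2 := fun D hD => by
    rw [symmDiffConv_self_eq_sum_powersetCard ha hD]
    refine sq_sum_le_card_mul_sum_sq.trans ?_
    rw [card_powersetCard, hD]
    exact mul_le_mul (by norm_num [Nat.choose]) (sum_le_univ_sum_of_nonneg fun E => sq_nonneg _)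
      (sum_nonneg fun _ _ => sq_nonneg _) (by norm_num)
  calc ∑ D with #D = 4, symmDiffConv a a D ^ 2
      ≤ ∑ D with #D = 4, 6 * ∑ E, (a E * a (E ∆ D)) ^ 2 :=
        sum_le_sum fun D hD' => hD D (mem_filter.1 hD').2
    _ ≤ ∑ D, 6 * ∑ E, (a E * a (E ∆ D)) ^ 2 :=
        sum_le_univ_sum_of_nonneg fun D => by positivity
    _ = 6 * (∑ E, a E ^ 2) ^ 2 := by
        simp_rw [← mul_sum, mul_pow]
        rw [sum_comm]
        simp_rw [← mul_sum, sum_symmDiff_right _ fun D => a D ^ 2, ← sum_mul, sq]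

lemma sum_symmDiffConv_self_sq_card_two_le (ha : ∀ E, #E ≠ 2 → a E = 0) :
    ∑ D with #D = 2, symmDiffConv a a D ^ 2 ≤ 8 * (∑ E, a E ^ 2) ^ 2 := by
  set R : α → ℝ := fun u => ∑ c, a {u, c} ^ 2
  have hR : ∑ u, R u = 2 * ∑ E, a E ^ 2 :=
    sum_sum_pair_eq_two_mul_sum (f := fun E => a E ^ 2) fun E hE => by simp [ha E hE]
  have hterm : ∀ u v : α,
      (if #({u, v} : Finset α) = 2 then symmDiffConv a a {u, v} ^ 2 else 0) ≤ 4 * (R u * R v) := by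
    intro u v
    split_ifs with h
    · have huv : u ≠ v := by rintro rfl; simp at h
      have hcs : (∑ c, a {u, c} * a {v, c}) ^ 2 ≤ R u * R v := sum_mul_sq_le_sq_mul_sq _ _ _
      rw [symmDiffConv_self_pair ha huv]
      linarith
    · positivity
  have hpair := sum_sum_pair_eq_two_mul_sum (f := fun D => if #D = 2 then symmDiffConv a a D ^ 2 else 0)
    fun D hD => if_neg hD
  calc ∑ D with #D = 2, symmDiffConv a a D ^ 2
      = (1 / 2) * ∑ u, ∑ v,
          (if #({u, v} : Finset α) = 2 then symmDiffConv a a {u, v} ^ 2 else 0) := by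
        rw [sum_filter, hpair]; ring
    _ ≤ (1 / 2) * ∑ u, ∑ v, 4 * (R u * R v) := by gcongr with u _ v _; exact hterm u v
    _ = 8 * (∑ E, a E ^ 2) ^ 2 := by
        simp_rw [← mul_sum, ← sum_mul]
        rw [hR]
        ring

lemma sum_symmDiffConv_self_sq_le (ha : ∀ E, #E ≠ 2 → a E = 0) :
    ∑ D, symmDiffConv a a D ^ 2 ≤ 15 * (∑ E, a E ^ 2) ^ 2 := by
  have hsplit : ∀ D : Finset α, symmDiffConv a a D ^ 2 =
      (if #D = 0 then symmDiffConv a a D ^ 2 else 0) +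
        (if #D = 2 then symmDiffConv a a D ^ 2 else 0) +
        (if #D = 4 then symmDiffConv a a D ^ 2 else 0) := fun D => by
    by_cases h : symmDiffConv a a D = 0
    · simp [h]
    · rcases card_eq_of_symmDiffConv_self_ne_zero ha h with h | h | h <;> simp [h]
  have hzero : ∑ D with #D = 0, symmDiffConv a a D ^ 2 = (∑ E, a E ^ 2) ^ 2 := by
    simp [card_eq_zero, filter_eq', symmDiffConv_self_empty]
  rw [sum_congr rfl fun D _ => hsplit D]
  simp only [sum_add_distrib, ← sum_filter]
  linarith [sum_symmDiffConv_self_sq_card_two_le ha, sum_symmDiffConv_self_sq_card_four_le ha]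

lemma sum_walshSeries_pow_four_le (ha : ∀ E, #E ≠ 2 → a E = 0) :
    ∑ s, walshSeries a s ^ 4 ≤ 2 ^ Fintype.card α * (15 * (∑ E, a E ^ 2) ^ 2) := by
  have hsq : ∀ s, walshSeries a s ^ 4
      = walshSeries (symmDiffConv a a) s * walshSeries (symmDiffConv a a) s := fun s => by
    rw [← walshSeries_mul_walshSeries]; ring
  simp_rw [hsq, sum_walshSeries_mul_walshSeries, ← sq]
  gcongr
  exact sum_symmDiffConv_self_sq_le ha

theorem two_pow_card_le_sixty_mul_card_walshSeries_nonpos (ha : ∀ E, #E ≠ 2 → a E = 0)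
    (ha₀ : a ≠ 0) :
    (2 : ℝ) ^ Fintype.card α ≤ 60 * #{s | walshSeries a s ≤ 0} := by
  set σ := ∑ E, a E ^ 2
  set N : ℝ := ((#{s | walshSeries a s ≤ 0} : ℕ) : ℝ)
  have hσ : 0 < σ := by
    obtain ⟨E, hE⟩ := Function.ne_iff.1 ha₀
    exact (pow_pos (abs_pos.2 hE) 2).trans_le (by
      rw [sq_abs]; exact single_le_sum (fun E _ => sq_nonneg (a E)) (mem_univ E))
  have hsum : ∑ s, walshSeries a s = 0 := by
    rw [sum_walshSeries, ha ∅ (by simp), mul_zero]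
  have hsq : ∑ s, walshSeries a s ^ 2 = 2 ^ Fintype.card α * σ := by
    simp_rw [sq, sum_walshSeries_mul_walshSeries, σ, sq]
  have hpz := sq_sum_sq_le_four_mul_card_nonpos_mul_sum_pow_four univ (walshSeries a) hsum
  rw [hsq] at hpz
  have hfour := sum_walshSeries_pow_four_le ha
  have hN : 0 ≤ N := Nat.cast_nonneg _
  have hpos : 0 < (2 : ℝ) ^ Fintype.card α * σ ^ 2 := by positivity
  refine le_of_mul_le_mul_right ?_ hpos
  calc (2 : ℝ) ^ Fintype.card α * (2 ^ Fintype.card α * σ ^ 2)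
      = (2 ^ Fintype.card α * σ) ^ 2 := by ring
    _ ≤ 4 * N * ∑ s, walshSeries a s ^ 4 := hpz
    _ ≤ 4 * N * (2 ^ Fintype.card α * (15 * σ ^ 2)) := by gcongr
    _ = 60 * N * (2 ^ Fintype.card α * σ ^ 2) := by ring

end PairSupported

section QuadraticForm

variable {α : Type*} [LinearOrder α]

lemma eq_and_eq_of_pair_eq_pair {i j k l : α} (hij : i < j) (hkl : k < l)
    (h : ({i, j} : Finset α) = {k, l}) : i = k ∧ j = l := by
  rw [← coe_inj, coe_pair, coe_pair, Set.pair_eq_pair_iff] at h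
  rcases h with h | ⟨rfl, rfl⟩
  · exact h
  · exact absurd (hij.trans hkl) (lt_irrefl _)

variable [Fintype α] [LocallyFiniteOrderTop α] (w : α → α → ℝ)

def pairCoeff (E : Finset α) : ℝ := ∑ i, ∑ j ∈ Ioi i, if {i, j} = E then w i j else 0

lemma pairCoeff_eq_zero {E : Finset α} (hE : #E ≠ 2) : pairCoeff w E = 0 :=
  sum_eq_zero fun i _ => sum_eq_zero fun j hj =>
    if_neg (by rintro rfl; exact hE (card_pair (mem_Ioi.1 hj).ne))

lemma pairCoeff_pair {i j : α} (hij : i < j) : pairCoeff w {i, j} = w i j := by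
  rw [pairCoeff, sum_eq_single i, sum_eq_single j, if_pos rfl]
  · exact fun l hl hlj => if_neg fun h => hlj (eq_and_eq_of_pair_eq_pair (mem_Ioi.1 hl) hij h).2
  · exact fun h => absurd (mem_Ioi.2 hij) h
  · exact fun k _ hki => sum_eq_zero fun l hl =>
      if_neg fun h => hki (eq_and_eq_of_pair_eq_pair (mem_Ioi.1 hl) hij h).1
  · exact fun h => absurd (mem_univ i) h

lemma walshSeries_pairCoeff (s : α → Bool) :
    walshSeries (pairCoeff w) s = ∑ i, ∑ j ∈ Ioi i, w i j * boolSign (s i) * boolSign (s j) := by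
  simp_rw [walshSeries, pairCoeff, sum_mul, ite_mul, zero_mul]
  rw [sum_comm]
  refine sum_congr rfl fun i _ => ?_
  rw [sum_comm]
  refine sum_congr rfl fun j hj => ?_
  rw [sum_ite_eq, if_pos (mem_univ _), walsh, prod_pair (mem_Ioi.1 hj).ne, mul_assoc]

end QuadraticForm

section Rademacher

open MeasureTheory ProbabilityTheory
open scoped ENNReal

noncomputable def rademacher : Measure ℝ :=
  (2⁻¹ : ℝ≥0∞) • Measure.dirac (-1) + (2⁻¹ : ℝ≥0∞) • Measure.dirac 1

lemma rademacher_eq_sum_dirac :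
    rademacher = ∑ b : Bool, (2⁻¹ : ℝ≥0∞) • Measure.dirac (boolSign b) := by
  simp [rademacher, boolSign, add_comm]

instance : IsProbabilityMeasure rademacher :=
  ⟨by simp [rademacher, ENNReal.inv_two_add_inv_two]⟩

lemma pi_rademacher (ι : Type*) [Fintype ι] [DecidableEq ι] :
    Measure.pi (fun _ : ι => rademacher) =
      ∑ s : ι → Bool,
        ((2 : ℝ≥0∞)⁻¹) ^ Fintype.card ι • Measure.dirac (fun i => boolSign (s i)) := by
  refine Measure.pi_eq fun A hA => ?_
  simp_rw [rademacher_eq_sum_dirac, Measure.finsetSum_apply, Measure.smul_apply, smul_eq_mul,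
    Measure.dirac_apply' _ (hA _), Measure.dirac_apply' _ (MeasurableSet.univ_pi hA),
    Fintype.prod_sum]
  refine sum_congr rfl fun s _ => ?_
  rw [prod_mul_distrib, prod_const, card_univ]
  congr 1
  classical
  simp only [Set.indicator_apply, Set.mem_univ_pi, Pi.one_apply, prod_boole, mem_univ,
    forall_const]

lemma measure_preimage_eq_card {Ω ι : Type*} [MeasurableSpace Ω] [Fintype ι] [DecidableEq ι]
    (μ : Measure Ω)
    (ξ : ι → Ω → ℝ) (hmeas : ∀ i, Measurable (ξ i)) (hindep : iIndepFun ξ μ)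
    (hlaw : ∀ i, μ.map (ξ i) = rademacher) {A : Set (ι → ℝ)} [DecidablePred (· ∈ A)]
    (hA : MeasurableSet A) :
    μ ((fun ω i => ξ i ω) ⁻¹' A) =
      ((2 : ℝ≥0∞)⁻¹) ^ Fintype.card ι * #{s : ι → Bool | (fun i => boolSign (s i)) ∈ A} := by
  rw [← Measure.map_apply (measurable_pi_lambda _ hmeas) hA,
    hindep.map_fun_eq_pi_map fun i => (hmeas i).aemeasurable]
  simp_rw [hlaw, pi_rademacher, Measure.finsetSum_apply, Measure.smul_apply, smul_eq_mul,
    Measure.dirac_apply' _ hA, ← mul_sum, Set.indicator_apply, Pi.one_apply, sum_boole]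

end Rademacher

end RademacherChaos

open MeasureTheory ProbabilityTheory RademacherChaos
open scoped ENNReal NNReal

theorem stmt_9_general {Ω : Type*} [MeasureSpace Ω]
    (n : ℕ) (w : Fin n → Fin n → ℝ)
    (hw : ∃ i j : Fin n, i < j ∧ w i j ≠ 0)
    (ξ : Fin n → Ω → ℝ) (hmeas : ∀ i, Measurable (ξ i))
    (hindep : iIndepFun ξ (volume : Measure Ω))
    (hlaw : ∀ i, Measure.map (ξ i) (volume : Measure Ω)
      = (2⁻¹ : ℝ≥0∞) • Measure.dirac (-1 : ℝ) + (2⁻¹ : ℝ≥0∞) • Measure.dirac (1 : ℝ)) :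
    ((volume : Measure Ω)
        {ω | ∑ i, ∑ j ∈ Finset.Ioi i, w i j * ξ i ω * ξ j ω ≤ 0}).toReal > 1 / 87 := by
  have hcoeff : pairCoeff w ≠ 0 := fun h => by
    obtain ⟨i, j, hij, hwij⟩ := hw
    exact hwij (by rw [← pairCoeff_pair w hij, h, Pi.zero_apply])
  have hcount := two_pow_card_le_sixty_mul_card_walshSeries_nonpos
    (fun E => pairCoeff_eq_zero w) hcoeff
  have hA : MeasurableSet {x : Fin n → ℝ | ∑ i, ∑ j ∈ Finset.Ioi i, w i j * x i * x j ≤ 0} :=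
    measurableSet_le (by fun_prop) measurable_const
  have hprob := measure_preimage_eq_card volume ξ hmeas hindep hlaw hA
  simp only [Set.preimage_ofPred_eq, Set.mem_ofPred_eq, ← walshSeries_pairCoeff] at hprob
  rw [hprob, ENNReal.toReal_mul, ENNReal.toReal_pow, ENNReal.toReal_inv, ENNReal.toReal_ofNat,
    ENNReal.toReal_natCast, inv_pow, ← div_eq_inv_mul, gt_iff_lt,
    div_lt_div_iff₀ (by norm_num) (by positivity)]
  have h2n : (0 : ℝ) < 2 ^ Fintype.card (Fin n) := by positivity
  linarith

theorem stmt_9 {Ω : Type*} [MeasureSpace Ω] [IsProbabilityMeasure (volume : Measure Ω)]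
    (n : ℕ) (w : Fin n → Fin n → ℝ)
    (hw : ∃ i j : Fin n, i < j ∧ w i j ≠ 0)
    (ξ : Fin n → Ω → ℝ) (hmeas : ∀ i, Measurable (ξ i))
    (hindep : iIndepFun ξ (volume : Measure Ω))
    (hlaw : ∀ i, Measure.map (ξ i) (volume : Measure Ω)
      = (2⁻¹ : ℝ≥0∞) • Measure.dirac (-1 : ℝ) + (2⁻¹ : ℝ≥0∞) • Measure.dirac (1 : ℝ)) :
    ((volume : Measure Ω)
        {ω | ∑ i, ∑ j ∈ Finset.Ioi i, w i j * ξ i ω * ξ j ω ≤ 0}).toReal > 1 / 87 :=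
  stmt_9_general n w hw ξ hmeas hindep hlaw
end

section
/- Let λ₁,…,λₙ be real numbers and η₁,…,ηₙ i.i.d. standard real Gaussian random variables. Set σ = √(Σᵢ λᵢ²) > 0 and δ = max{max_i λᵢ, 0}. Then for every α > 0, Prob{ Σᵢ λᵢηᵢ² − Σᵢ λᵢ ≥ α·σ } ≤ exp( − min{α, σ/δ}·α/8 ) (with σ/δ interpreted as +∞ when δ = 0). -/
/-!
Chernoff's bound. For a standard Gaussian `η`, `E exp (s (η² - 1)) = e^{-s} (1 - 2s)^{-1/2}`,
which is at most `e^{2s²}` for `s ≤ 1/4` because `1/(1 - t) ≤ e^{t + t²}` for `t ≤ 1/2`.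
By independence the mgf of `∑ λᵢ (ηᵢ² - 1)` at `t ≥ 0` is then at most `e^{2t²σ²}` as long as
`t λᵢ ≤ 1/4` for all `i`, and the exponential Markov inequality at `t = m / (4σ)` with
`m = min α (σ/δ)` (`m = α` when `δ = 0`) gives the bound `e^{-mα/8}`.
-/

open MeasureTheory ProbabilityTheory Real

lemma inv_one_sub_le_exp_add_sq {t : ℝ} (ht : t ≤ 1 / 2) : (1 - t)⁻¹ ≤ exp (t + t ^ 2) := by
  have h1t : 0 < 1 - t := by linarith
  rw [inv_le_iff_one_le_mul₀' h1t]
  rcases le_total t 0 with h0 | h0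
  · calc (1 : ℝ) ≤ (1 - t) * (1 + t + t ^ 2) := by nlinarith [pow_two_nonneg t]
      _ ≤ (1 - t) * exp (t + t ^ 2) := by
        gcongr; linarith [add_one_le_exp (t + t ^ 2)]
  · have hq := quadratic_le_exp_of_nonneg (by positivity : 0 ≤ t + t ^ 2)
    calc (1 : ℝ) ≤ (1 - t) * (1 + (t + t ^ 2) + (t + t ^ 2) ^ 2 / 2) := by
          nlinarith [mul_nonneg h0 h0, mul_nonneg (mul_nonneg h0 h0) h0,
            mul_nonneg (mul_nonneg (mul_nonneg h0 h0) h0) h1t.le]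
      _ ≤ (1 - t) * exp (t + t ^ 2) := by gcongr

lemma exp_neg_mul_inv_sqrt_one_sub_two_mul_le {s : ℝ} (hs : s ≤ 1 / 4) :
    exp (-s) * (√(1 - 2 * s))⁻¹ ≤ exp (2 * s ^ 2) := by
  have h : (√(1 - 2 * s))⁻¹ ≤ exp (s + 2 * s ^ 2) := by
    rw [← sqrt_inv, show s + 2 * s ^ 2 = (2 * s + (2 * s) ^ 2) / 2 by ring, exp_half]
    exact sqrt_le_sqrt (inv_one_sub_le_exp_add_sq (by linarith))
  calc exp (-s) * (√(1 - 2 * s))⁻¹ ≤ exp (-s) * exp (s + 2 * s ^ 2) := by gcongr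
    _ = exp (2 * s ^ 2) := by rw [← exp_add]; ring_nf

lemma gaussianPDFReal_zero_one_smul_exp_mul_sq (s x : ℝ) :
    gaussianPDFReal 0 1 x • exp (s * x ^ 2) = (√(2 * π))⁻¹ * exp (-(1 / 2 - s) * x ^ 2) := by
  rw [gaussianPDFReal, smul_eq_mul, mul_assoc, ← exp_add]
  push_cast
  ring_nf

lemma integrable_exp_mul_sq_gaussianReal {s : ℝ} (hs : 2 * s < 1) :
    Integrable (fun x ↦ exp (s * x ^ 2)) (gaussianReal 0 1) := by
  rw [gaussianReal_of_var_ne_zero _ one_ne_zero, integrable_withDensity_iff_integrable_smul'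
    (measurable_gaussianPDF 0 1) (ae_of_all _ fun _ ↦ gaussianPDF_lt_top)]
  simp_rw [toReal_gaussianPDF, gaussianPDFReal_zero_one_smul_exp_mul_sq]
  exact (integrable_exp_neg_mul_sq (by linarith)).const_mul _

-- For `1 ≤ 2 * s` both sides are junk values `0`.
lemma integral_exp_mul_sq_gaussianReal (s : ℝ) :
    ∫ x, exp (s * x ^ 2) ∂gaussianReal 0 1 = (√(1 - 2 * s))⁻¹ := by
  simp_rw [integral_gaussianReal_eq_integral_smul one_ne_zero,
    gaussianPDFReal_zero_one_smul_exp_mul_sq, integral_const_mul, integral_gaussian,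
    ← sqrt_inv, ← sqrt_mul (inv_nonneg.2 (by positivity : (0 : ℝ) ≤ 2 * π))]
  congr 1
  field_simp

lemma exp_mul_mul_sq_sub (c t x : ℝ) :
    exp (t * (c * x ^ 2 - c)) = exp (-(c * t)) * exp (c * t * x ^ 2) := by
  rw [← exp_add]; ring_nf

lemma integrable_exp_mul_mul_sq_sub_gaussianReal {c t : ℝ} (h : 2 * (c * t) < 1) :
    Integrable (fun x ↦ exp (t * (c * x ^ 2 - c))) (gaussianReal 0 1) := by
  simp_rw [exp_mul_mul_sq_sub]
  exact (integrable_exp_mul_sq_gaussianReal h).const_mul _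

lemma mgf_mul_sq_sub_gaussianReal (c t : ℝ) :
    mgf (fun x ↦ c * x ^ 2 - c) (gaussianReal 0 1) t
      = exp (-(c * t)) * (√(1 - 2 * (c * t)))⁻¹ := by
  simp_rw [mgf, exp_mul_mul_sq_sub, integral_const_mul, integral_exp_mul_sq_gaussianReal]

section

variable {Ω ι : Type*} [MeasurableSpace Ω] {μ : Measure Ω}

lemma integrable_exp_mul_mul_sq_sub_of_map_eq_gaussianReal {X : Ω → ℝ} (hX : Measurable X)
    (hlaw : μ.map X = gaussianReal 0 1) {c t : ℝ} (h : 2 * (c * t) < 1) :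
    Integrable (fun ω ↦ exp (t * (c * X ω ^ 2 - c))) μ := by
  have := integrable_exp_mul_mul_sq_sub_gaussianReal h
  rw [← hlaw, integrable_map_measure (by fun_prop) hX.aemeasurable] at this
  exact this

lemma mgf_mul_sq_sub_le_of_map_eq_gaussianReal {X : Ω → ℝ} (hX : Measurable X)
    (hlaw : μ.map X = gaussianReal 0 1) {c t : ℝ} (h : c * t ≤ 1 / 4) :
    mgf (fun ω ↦ c * X ω ^ 2 - c) μ t ≤ exp (2 * (c * t) ^ 2) := by
  have := mgf_map (μ := μ) hX.aemeasurable (X := fun x ↦ c * x ^ 2 - c) (t := t) (by fun_prop)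
  rw [hlaw, mgf_mul_sq_sub_gaussianReal] at this
  rw [← Function.comp_def (fun x ↦ c * x ^ 2 - c) X, ← this]
  exact exp_neg_mul_inv_sqrt_one_sub_two_mul_le h

lemma measureReal_sum_mul_sq_sub_ge_le [IsProbabilityMeasure μ] [Fintype ι] {η : ι → Ω → ℝ}
    (hmeas : ∀ i, Measurable (η i)) (hindep : iIndepFun η μ)
    (hlaw : ∀ i, μ.map (η i) = gaussianReal 0 1) (lam : ι → ℝ) {t : ℝ} (ht : 0 ≤ t)
    (hlam : ∀ i, lam i * t ≤ 1 / 4) (a : ℝ) :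
    μ.real {ω | a ≤ ∑ i, (lam i * η i ω ^ 2 - lam i)}
      ≤ exp (-t * a + 2 * t ^ 2 * ∑ i, lam i ^ 2) := by
  set X : ι → Ω → ℝ := fun i ω ↦ lam i * η i ω ^ 2 - lam i
  have hXmeas : ∀ i, Measurable (X i) := fun i ↦ by fun_prop
  have hXindep : iIndepFun X μ :=
    hindep.comp (fun i x ↦ lam i * x ^ 2 - lam i) fun i ↦ by fun_prop
  have hint : Integrable (fun ω ↦ exp (t * (∑ i, X i) ω)) μ :=
    hXindep.integrable_exp_mul_sum hXmeas fun i _ ↦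
      integrable_exp_mul_mul_sq_sub_of_map_eq_gaussianReal (hmeas i) (hlaw i) (by linarith [hlam i])
  calc μ.real {ω | a ≤ ∑ i, X i ω} = μ.real {ω | a ≤ (∑ i, X i) ω} := by
        simp only [Finset.sum_apply]
    _ ≤ exp (-t * a) * ∏ i, mgf (X i) μ t := by
        rw [← hXindep.mgf_sum hXmeas]; exact measure_ge_le_exp_mul_mgf a ht hint
    _ ≤ exp (-t * a) * ∏ i, exp (2 * (lam i * t) ^ 2) := by
        gcongr with i
        · exact fun i _ ↦ mgf_nonneg
        · exact mgf_mul_sq_sub_le_of_map_eq_gaussianReal (hmeas i) (hlaw i) (hlam i)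
    _ = exp (-t * a + 2 * t ^ 2 * ∑ i, lam i ^ 2) := by
        rw [← exp_sum, ← exp_add, Finset.mul_sum]; ring_nf

lemma measureReal_sum_mul_sq_sub_sum_ge_le [IsProbabilityMeasure μ] [Fintype ι] {η : ι → Ω → ℝ}
    (hmeas : ∀ i, Measurable (η i)) (hindep : iIndepFun η μ)
    (hlaw : ∀ i, μ.map (η i) = gaussianReal 0 1) {lam : ι → ℝ} {σ : ℝ}
    (hσ : σ = √(∑ i, lam i ^ 2)) (hσpos : 0 < σ) {m α : ℝ} (hm : 0 ≤ m) (hmα : m ≤ α)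
    (hlam : ∀ i, m * lam i ≤ σ) :
    μ.real {ω | α * σ ≤ (∑ i, lam i * η i ω ^ 2) - ∑ i, lam i} ≤ exp (-(m * α / 8)) := by
  have hσsq : ∑ i, lam i ^ 2 = σ ^ 2 := by
    rw [hσ, sq_sqrt (Finset.sum_nonneg fun i _ ↦ sq_nonneg _)]
  -- Chernoff at `t = m / (4σ)`: the exponent is `-mα/4 + m²/8 ≤ -mα/8`.
  have hlam' : ∀ i, lam i * (m / (4 * σ)) ≤ 1 / 4 := fun i ↦ by
    rw [mul_div_assoc', div_le_div_iff₀ (by positivity) (by norm_num)]; linarith [hlam i]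
  have := measureReal_sum_mul_sq_sub_ge_le hmeas hindep hlaw lam (by positivity) hlam' (α * σ)
  simp_rw [← Finset.sum_sub_distrib]
  refine this.trans (exp_le_exp.2 ?_)
  rw [hσsq]
  field_simp
  nlinarith

end

theorem stmt_13 {Ω : Type*} [MeasureSpace Ω] [IsProbabilityMeasure (volume : Measure Ω)]
    (n : ℕ) (lam : Fin n → ℝ)
    (η : Fin n → Ω → ℝ) (hmeas : ∀ i, Measurable (η i))
    (hindep : iIndepFun η (volume : Measure Ω))
    (hlaw : ∀ i, Measure.map (η i) (volume : Measure Ω) = gaussianReal 0 1)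
    (σ δ : ℝ) (hσ : σ = Real.sqrt (∑ i, (lam i) ^ 2)) (hσpos : 0 < σ)
    (hδ : δ = max (⨆ i, lam i) 0)
    (α : ℝ) (hα : 0 < α) :
    ((volume : Measure Ω)
        {ω | α * σ ≤ (∑ i, lam i * (η i ω) ^ 2) - ∑ i, lam i}).toReal ≤
      if δ = 0 then Real.exp (-(α * α / 8))
      else Real.exp (-(min α (σ / δ) * α / 8)) := by
  have hδ0 : 0 ≤ δ := hδ ▸ le_max_right _ _
  have hlam_le : ∀ i, lam i ≤ δ := fun i ↦
    (le_ciSup (Set.finite_range lam).bddAbove i).trans (hδ ▸ le_max_left _ _)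
  have key : ∀ m, 0 ≤ m → m ≤ α → m * δ ≤ σ →
      (volume {ω | α * σ ≤ (∑ i, lam i * η i ω ^ 2) - ∑ i, lam i}).toReal ≤ exp (-(m * α / 8)) :=
    fun m hm hmα hmδ ↦ measureReal_sum_mul_sq_sub_sum_ge_le hmeas hindep hlaw hσ hσpos hm hmα
      fun i ↦ (mul_le_mul_of_nonneg_left (hlam_le i) hm).trans hmδ
  split_ifs with hδ_eq
  · exact key α hα.le le_rfl (by rw [hδ_eq, mul_zero]; exact hσpos.le)
  · have hδpos : 0 < δ := hδ0.lt_of_ne' hδ_eq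
    refine key _ (le_min hα.le (by positivity)) (min_le_left _ _) ?_
    calc min α (σ / δ) * δ ≤ σ / δ * δ := by gcongr; exact min_le_right _ _
      _ = σ := div_mul_cancel₀ σ hδ_eq
end

section
/- Let M > 0 and suppose real numbers x₁, x₂ satisfy Mx₁x₂ + x₂² ≤ 1, −Mx₁x₂ + x₂² ≤ 1, and M(x₁² − x₂²) ≤ 1. Then x₁² + (1/M)·x₂² ≤ (√5 + 1)/(2M) + 1/M + 1/M ≤ 2.618/M + 1. -/
theorem stmt_16 (M x₁ x₂ : ℝ) (hM : 0 < M)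
    (h1 : M * (x₁ * x₂) + x₂ ^ 2 ≤ 1)
    (h2 : -(M * (x₁ * x₂)) + x₂ ^ 2 ≤ 1)
    (h3 : M * (x₁ ^ 2 - x₂ ^ 2) ≤ 1) :
    x₁ ^ 2 ≤ (Real.sqrt 5 + 1) / (2 * M) ∧
      x₁ ^ 2 + (1 / M) * x₂ ^ 2 ≤ (Real.sqrt 5 + 1) / (2 * M) + 1 / M + 1 / M := by
  have hs : Real.sqrt 5 ^ 2 = 5 := Real.sq_sqrt (by norm_num)
  have hs2 : (2:ℝ) ≤ Real.sqrt 5 := by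
    nlinarith [Real.sqrt_nonneg 5, hs]
  have hx2 : x₂ ^ 2 ≤ 1 := by nlinarith [sq_nonneg x₂, sq_nonneg (M * (x₁ * x₂))]
  have hkey : M * x₁ ^ 2 ≤ (Real.sqrt 5 + 1) / 2 := by
    rcases le_or_gt (x₂ ^ 2) ((Real.sqrt 5 - 1) / (2 * M)) with hc | hc
    · nlinarith
    · have hd : (0:ℝ) < (Real.sqrt 5 - 1) / (2 * M) := div_pos (by nlinarith) (by positivity)
      have hpos : 0 < x₂ ^ 2 := lt_trans hd hc
      have hsq : M ^ 2 * (x₁ ^ 2 * x₂ ^ 2) ≤ 1 := by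
        nlinarith [sq_nonneg (1 - x₂ ^ 2), sq_nonneg x₂]
      nlinarith [mul_pos hM hpos, sq_nonneg x₁, mul_pos hM hM]
  have g1 : x₁ ^ 2 ≤ (Real.sqrt 5 + 1) / (2 * M) := by
    rw [div_mul_eq_div_div, le_div_iff₀ hM]
    linarith [hkey]
  refine ⟨g1, ?_⟩
  have h4 : (1 / M) * x₂ ^ 2 ≤ 1 / M := by
    have := one_div_pos.mpr hM
    nlinarith
  linarith [one_div_pos.mpr hM]
end
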